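/- Let m,n be positive integers and let A be an m×n badly approximable matrix (there is c > 0 with ‖q‖^n ⟨Aq⟩^m ≥ c for all nonzero q ∈ ℤ^n). Then for every γ ∈ [0,1)^m there exists l ∈ ℕ such that ∑_{t=l}^∞ t^{n-1} · (min_{q ∈ ℤ^n, l ≤ ‖q‖ ≤ t} ⟨Aq − γ⟩^m) = ∞; equivalently, there exists a decreasing ψ : ℕ → [0,∞) with ∑ q^{n-1} ψ(q)^m = ∞ such that ⟨Aq − γ⟩ < ψ(‖q‖) holds for only finitely many q ∈ ℤ^n. -/
import Mathlib


open Filter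

/-- The supremum norm of an integer vector, as a natural number. -/
def znn {n : ℕ} (q : Fin n → ℤ) : ℕ := Finset.univ.sup fun i => (q i).natAbs

/-- Supremum-norm distance of `y ∈ ℝ^m` to the integer lattice `ℤ^m`. -/
noncomputable def dz {m : ℕ} (y : Fin m → ℝ) : ℝ := ⨅ p : Fin m → ℤ, ‖y - fun i => (p i : ℝ)‖

/-- `⟨Aq - γ⟩`, the approximation error. -/
noncomputable def approxErr {m n : ℕ} (A : Matrix (Fin m) (Fin n) ℝ) (γ : Fin m → ℝ)
    (q : Fin n → ℤ) : ℝ := dz (A.mulVec (fun i => (q i : ℝ)) - γ)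

/-- `min_{q ∈ ℤ^n, l ≤ ‖q‖ ≤ t} ⟨Aq - γ⟩^m`. -/
noncomputable def minErr {m n : ℕ} (A : Matrix (Fin m) (Fin n) ℝ) (γ : Fin m → ℝ)
    (l t : ℕ) : ℝ :=
  sInf {x | ∃ q : Fin n → ℤ, l ≤ znn q ∧ znn q ≤ t ∧ x = approxErr A γ q ^ m}

lemma dz_bdd {m : ℕ} (y : Fin m → ℝ) :
    BddBelow (Set.range fun p : Fin m → ℤ => ‖y - fun i => (p i : ℝ)‖) :=
  ⟨0, by rintro x ⟨p, rfl⟩; exact norm_nonneg _⟩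

lemma dz_nonneg {m : ℕ} (y : Fin m → ℝ) : 0 ≤ dz y :=
  le_ciInf fun p => norm_nonneg _

lemma dz_le {m : ℕ} (y : Fin m → ℝ) (p : Fin m → ℤ) : dz y ≤ ‖y - fun i => (p i : ℝ)‖ :=
  ciInf_le (dz_bdd y) p

lemma dz_sub_le {m : ℕ} (x x' : Fin m → ℝ) : dz (x - x') ≤ dz x + dz x' := by
  rw [← sub_le_iff_le_add]
  refine le_ciInf fun p => ?_
  rw [sub_le_iff_le_add, add_comm, ← sub_le_iff_le_add]
  refine le_ciInf fun p' => ?_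
  rw [sub_le_iff_le_add]
  calc dz (x - x') ≤ ‖(x - x') - fun i => ((p i - p' i : ℤ) : ℝ)‖ := dz_le _ _
    _ ≤ ‖x - fun i => (p i : ℝ)‖ + ‖x' - fun i => (p' i : ℝ)‖ := by
        have : ((x - x') - fun i => ((p i - p' i : ℤ) : ℝ))
            = (x - fun i => (p i : ℝ)) - (x' - fun i => (p' i : ℝ)) := by
          funext i; simp; ring
        rw [this]; exact norm_sub_le _ _
    _ = ‖x' - fun i => (p' i : ℝ)‖ + ‖x - fun i => (p i : ℝ)‖ := add_comm _ _

lemma approxErr_nonneg {m n : ℕ} (A : Matrix (Fin m) (Fin n) ℝ) (γ : Fin m → ℝ)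
    (q : Fin n → ℤ) : 0 ≤ approxErr A γ q := dz_nonneg _

lemma natAbs_le_znn {n : ℕ} (q : Fin n → ℤ) (i : Fin n) : (q i).natAbs ≤ znn q :=
  Finset.le_sup (f := fun i => (q i).natAbs) (Finset.mem_univ i)

lemma znn_sub_le {n : ℕ} (q q' : Fin n → ℤ) : znn (q - q') ≤ znn q + znn q' := by
  refine Finset.sup_le fun i _ => ?_
  calc ((q - q') i).natAbs = (q i - q' i).natAbs := by simp
    _ ≤ (q i).natAbs + (q' i).natAbs := Int.natAbs_sub_le _ _
    _ ≤ znn q + znn q' := add_le_add (natAbs_le_znn q i) (natAbs_le_znn q' i)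

lemma sep {m n : ℕ} (A : Matrix (Fin m) (Fin n) ℝ) (γ : Fin m → ℝ) (c : ℝ)
    (hbad : ∀ q : Fin n → ℤ, q ≠ 0 → c ≤ (znn q : ℝ) ^ n * approxErr A 0 q ^ m)
    (q q' : Fin n → ℤ) (h : q ≠ q') (T : ℕ) (hq : znn q ≤ T) (hq' : znn q' ≤ T) :
    c ≤ ((2 * T : ℕ) : ℝ) ^ n * (approxErr A γ q + approxErr A γ q') ^ m := by
  have hqq : q - q' ≠ 0 := sub_ne_zero.mpr h
  have h1 := hbad (q - q') hqq
  have hz : znn (q - q') ≤ 2 * T := le_trans (znn_sub_le q q') (by omega)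
  have he : approxErr A 0 (q - q') ≤ approxErr A γ q + approxErr A γ q' := by
    unfold approxErr
    have h2 : A.mulVec (fun i => ((q - q') i : ℝ)) - 0
        = (A.mulVec (fun i => (q i : ℝ)) - γ) - (A.mulVec (fun i => (q' i : ℝ)) - γ) := by
      have h3 : (fun i => ((q - q') i : ℝ))
          = (fun i => (q i : ℝ)) - (fun i => (q' i : ℝ)) := by
        funext i; simp [Pi.sub_apply]
      rw [h3, Matrix.mulVec_sub]; abel
    rw [h2]; exact dz_sub_le _ _
  refine h1.trans (mul_le_mul ?_ ?_ ?_ ?_)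
  · exact pow_le_pow_left₀ (Nat.cast_nonneg _) (Nat.cast_le.mpr hz) n
  · exact pow_le_pow_left₀ (approxErr_nonneg _ _ _) he m
  · exact pow_nonneg (approxErr_nonneg _ _ _) m
  · positivity



lemma znn_ball_finite {n : ℕ} (t : ℕ) : {q : Fin n → ℤ | znn q ≤ t}.Finite := by
  refine Set.Finite.subset (Set.Finite.pi fun i : Fin n => Set.finite_Icc (-(t:ℤ)) t) ?_
  intro q hq
  intro i _
  have := natAbs_le_znn q i
  have h2 : (q i).natAbs ≤ t := le_trans this hq
  simp only [Set.mem_Icc]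
  omega

lemma mSet_eq {m n : ℕ} (A : Matrix (Fin m) (Fin n) ℝ) (γ : Fin m → ℝ) (l t : ℕ) :
    {x | ∃ q : Fin n → ℤ, l ≤ znn q ∧ znn q ≤ t ∧ x = approxErr A γ q ^ m}
      = (fun q : Fin n → ℤ => approxErr A γ q ^ m) '' {q | l ≤ znn q ∧ znn q ≤ t} := by
  ext x
  constructor
  · rintro ⟨q, h1, h2, rfl⟩; exact ⟨q, ⟨h1, h2⟩, rfl⟩
  · rintro ⟨q, ⟨h1, h2⟩, rfl⟩; exact ⟨q, h1, h2, rfl⟩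

lemma mSet_finite {m n : ℕ} (A : Matrix (Fin m) (Fin n) ℝ) (γ : Fin m → ℝ) (l t : ℕ) :
    {x | ∃ q : Fin n → ℤ, l ≤ znn q ∧ znn q ≤ t ∧ x = approxErr A γ q ^ m}.Finite := by
  rw [mSet_eq]
  exact Set.Finite.image _ ((znn_ball_finite t).subset fun q hq => hq.2)

lemma znn_const {n : ℕ} (hn : 0 < n) (l : ℕ) : znn (fun _ : Fin n => (l : ℤ)) = l := by
  have : Nonempty (Fin n) := ⟨⟨0, hn⟩⟩
  unfold znn
  rw [Finset.sup_const Finset.univ_nonempty]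
  simp

lemma mSet_nonempty {m n : ℕ} (hn : 0 < n) (A : Matrix (Fin m) (Fin n) ℝ) (γ : Fin m → ℝ)
    {l t : ℕ} (hlt : l ≤ t) :
    {x | ∃ q : Fin n → ℤ, l ≤ znn q ∧ znn q ≤ t ∧ x = approxErr A γ q ^ m}.Nonempty := by
  refine ⟨approxErr A γ (fun _ => (l : ℤ)) ^ m, ⟨fun _ => (l : ℤ), ?_, ?_, rfl⟩⟩ <;>
    rw [znn_const hn l]
  exact hlt

lemma mSet_bdd {m n : ℕ} (A : Matrix (Fin m) (Fin n) ℝ) (γ : Fin m → ℝ) (l t : ℕ) :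
    BddBelow {x | ∃ q : Fin n → ℤ, l ≤ znn q ∧ znn q ≤ t ∧ x = approxErr A γ q ^ m} := by
  refine ⟨0, ?_⟩
  rintro x ⟨q, _, _, rfl⟩
  exact pow_nonneg (approxErr_nonneg _ _ _) m

lemma minErr_nonneg {m n : ℕ} (A : Matrix (Fin m) (Fin n) ℝ) (γ : Fin m → ℝ) (l t : ℕ) :
    0 ≤ minErr A γ l t := by
  apply Real.sInf_nonneg
  rintro x ⟨q, _, _, rfl⟩
  exact pow_nonneg (approxErr_nonneg _ _ _) m

lemma minErr_le {m n : ℕ} (A : Matrix (Fin m) (Fin n) ℝ) (γ : Fin m → ℝ) {l t : ℕ}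
    {q : Fin n → ℤ} (h1 : l ≤ znn q) (h2 : znn q ≤ t) :
    minErr A γ l t ≤ approxErr A γ q ^ m :=
  csInf_le (mSet_bdd A γ l t) ⟨q, h1, h2, rfl⟩

lemma minErr_mem {m n : ℕ} (hn : 0 < n) (A : Matrix (Fin m) (Fin n) ℝ) (γ : Fin m → ℝ)
    {l t : ℕ} (hlt : l ≤ t) :
    ∃ q : Fin n → ℤ, l ≤ znn q ∧ znn q ≤ t ∧ minErr A γ l t = approxErr A γ q ^ m :=
  (mSet_nonempty hn A γ hlt).csInf_mem (mSet_finite A γ l t)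

lemma minErr_anti {m n : ℕ} (hn : 0 < n) (A : Matrix (Fin m) (Fin n) ℝ) (γ : Fin m → ℝ)
    {l t t' : ℕ} (hlt : l ≤ t) (htt : t ≤ t') :
    minErr A γ l t' ≤ minErr A γ l t := by
  refine csInf_le_csInf (mSet_bdd A γ l t') (mSet_nonempty hn A γ hlt) ?_
  rintro x ⟨q, h1, h2, rfl⟩
  exact ⟨q, h1, h2.trans htt, rfl⟩

lemma key_lemma {m n : ℕ} (hm : 0 < m) (hn : 0 < n) (A : Matrix (Fin m) (Fin n) ℝ)
    (γ : Fin m → ℝ) (c : ℝ)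
    (hbad : ∀ q : Fin n → ℤ, q ≠ 0 → c ≤ (znn q : ℝ) ^ n * approxErr A 0 q ^ m)
    {l t T' : ℕ} (hl1 : 1 ≤ l) (hl : l ≤ t) (htT : t ≤ T')
    (hdec : minErr A γ l T' < minErr A γ l t) :
    c < ((2 * T' : ℕ) : ℝ) ^ n * 2 ^ m * minErr A γ l t := by
  obtain ⟨q, hq1, hq2, hq3⟩ := minErr_mem hn A γ hl
  obtain ⟨q', hq'1, hq'2, hq'3⟩ := minErr_mem hn A γ (hl.trans htT)
  have hεlt : approxErr A γ q' < approxErr A γ q := by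
    by_contra h
    push_neg at h
    have := pow_le_pow_left₀ (approxErr_nonneg A γ q) h m
    rw [← hq3, ← hq'3] at this
    exact absurd this (not_le.mpr hdec)
  have hne : q ≠ q' := by
    rintro rfl
    exact lt_irrefl _ hεlt
  have hsep := sep A γ c hbad q q' hne T' (hq2.trans htT) hq'2
  have hstrict : (approxErr A γ q + approxErr A γ q') ^ m < (2 * approxErr A γ q) ^ m := by
    have h0 := approxErr_nonneg A γ q'
    refine pow_lt_pow_left₀ (by linarith) (by linarith) hm.ne'
  have h2T : (0:ℝ) < ((2 * T' : ℕ) : ℝ) ^ n := by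
    have : 0 < T' := by omega
    positivity
  calc c ≤ ((2 * T' : ℕ) : ℝ) ^ n * (approxErr A γ q + approxErr A γ q') ^ m := hsep
    _ < ((2 * T' : ℕ) : ℝ) ^ n * (2 * approxErr A γ q) ^ m :=
        (mul_lt_mul_iff_right₀ h2T).mpr hstrict
    _ = ((2 * T' : ℕ) : ℝ) ^ n * 2 ^ m * minErr A γ l t := by
        rw [mul_pow, hq3]; ring

lemma main_nonsummable {m n : ℕ} (hm : 0 < m) (hn : 0 < n) (A : Matrix (Fin m) (Fin n) ℝ)
    (γ : Fin m → ℝ) (c : ℝ) (hc : 0 < c)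
    (hbad : ∀ q : Fin n → ℤ, q ≠ 0 → c ≤ (znn q : ℝ) ^ n * approxErr A 0 q ^ m)
    {l : ℕ} (hl : 1 ≤ l)
    (hpos : ∀ q : Fin n → ℤ, l ≤ znn q → 0 < approxErr A γ q) :
    ¬ Summable (fun t : ℕ => if l ≤ t then (t : ℝ) ^ (n - 1) * minErr A γ l t else 0) := by
  classical
  intro hsum
  have hμpos : ∀ t : ℕ, l ≤ t → 0 < minErr A γ l t := by
    intro t ht
    obtain ⟨q, h1, h2, h3⟩ := minErr_mem hn A γ ht
    rw [h3]; exact pow_pos (hpos q h1) m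
  have hK : (0:ℝ) < c / (2 ^ m * 8 ^ n) := by positivity
  obtain ⟨s, hs⟩ := summable_iff_vanishing.mp hsum _ (Iio_mem_nhds hK)
  set T : ℕ := max l (s.sup id + 1) with hTdef
  have hTl : l ≤ T := le_max_left _ _
  have hT1 : 1 ≤ T := le_trans hl hTl
  have hnots : ∀ t : ℕ, T ≤ t → t ∉ s := by
    intro t ht hts
    have h1 : t ≤ s.sup id := Finset.le_sup (f := id) hts
    have h2 : s.sup id + 1 ≤ T := le_max_right _ _
    omega
  by_cases hexists : ∃ u : ℕ, 2 * T < u ∧ minErr A γ l u < minErr A γ l (2 * T)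
  · -- there is a later strict decrease; take the first one
    set T' : ℕ := Nat.find hexists with hT'def
    obtain ⟨hT'1, hT'2⟩ := Nat.find_spec hexists
    have hT'3 : 3 ≤ T' := by omega
    set s0 : ℝ := minErr A γ l (2 * T) with hs0def
    have hs0pos : 0 < s0 := hμpos _ (by omega)
    have hkey : c < ((2 * T' : ℕ) : ℝ) ^ n * 2 ^ m * s0 :=
      key_lemma hm hn A γ c hbad hl (by omega) (by omega) hT'2
    set b : Finset ℕ := Finset.Icc (T' / 2) (T' - 1) with hbdef
    have hbT : ∀ t ∈ b, T ≤ t := by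
      intro t htb
      rw [hbdef, Finset.mem_Icc] at htb
      omega
    have hμb : ∀ t ∈ b, s0 ≤ minErr A γ l t := by
      intro t htb
      have htT := hbT t htb
      rw [hbdef, Finset.mem_Icc] at htb
      by_cases h : t ≤ 2 * T
      · exact minErr_anti hn A γ (le_trans hTl htT) h
      · have hnot := Nat.find_min hexists (m := t) (by omega)
        push_neg at hnot
        exact hnot (by omega)
    have hcard : b.card = T' - T' / 2 := by
      rw [hbdef, Nat.card_Icc]; omega
    have hterm : ∀ t ∈ b, ((T' / 2 : ℕ) : ℝ) ^ (n - 1) * s0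
        ≤ (if l ≤ t then (t : ℝ) ^ (n - 1) * minErr A γ l t else 0) := by
      intro t htb
      have htT := hbT t htb
      have hlt : l ≤ t := le_trans hTl htT
      rw [if_pos hlt]
      have h1 : ((T' / 2 : ℕ) : ℝ) ^ (n - 1) ≤ (t : ℝ) ^ (n - 1) := by
        apply pow_le_pow_left₀ (Nat.cast_nonneg _)
        have := (Finset.mem_Icc.mp (by rw [hbdef] at htb; exact htb)).1
        exact_mod_cast this
      exact mul_le_mul h1 (hμb t htb) hs0pos.le (by positivity)
    have hsumlb : (b.card : ℝ) * (((T' / 2 : ℕ) : ℝ) ^ (n - 1) * s0)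
        ≤ ∑ t ∈ b, (if l ≤ t then (t : ℝ) ^ (n - 1) * minErr A γ l t else 0) := by
      have h := Finset.card_nsmul_le_sum b _ _ hterm
      rwa [nsmul_eq_mul] at h
    have hcard2 : (T' / 2 : ℕ) ≤ b.card := by rw [hcard]; omega
    have hblock : ((T' / 2 : ℕ) : ℝ) ^ n * s0
        ≤ ∑ t ∈ b, (if l ≤ t then (t : ℝ) ^ (n - 1) * minErr A γ l t else 0) := by
      refine le_trans ?_ hsumlb
      have he : ((T' / 2 : ℕ) : ℝ) ^ n = ((T' / 2 : ℕ) : ℝ) * ((T' / 2 : ℕ) : ℝ) ^ (n - 1) := by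
        conv_lhs => rw [show n = (n - 1) + 1 by omega]
        rw [pow_succ]; ring
      rw [he]
      have hcc : ((T' / 2 : ℕ) : ℝ) ≤ (b.card : ℝ) := Nat.cast_le.mpr hcard2
      have hnn : (0:ℝ) ≤ ((T' / 2 : ℕ) : ℝ) ^ (n - 1) * s0 := by positivity
      nlinarith [hnn, hcc]
    have hdisj : Disjoint b s :=
      Finset.disjoint_left.mpr fun ht htb hts => hnots _ (hbT _ htb) hts
    have hlt := hs b hdisj
    rw [Set.mem_Iio] at hlt
    have h8 : ((2 * T' : ℕ) : ℝ) ^ n ≤ 8 ^ n * ((T' / 2 : ℕ) : ℝ) ^ n := by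
      have hnat : (2 * T' : ℕ) ≤ 8 * (T' / 2) := by omega
      calc ((2 * T' : ℕ) : ℝ) ^ n ≤ ((8 * (T' / 2) : ℕ) : ℝ) ^ n :=
            pow_le_pow_left₀ (Nat.cast_nonneg _) (Nat.cast_le.mpr hnat) n
        _ = 8 ^ n * ((T' / 2 : ℕ) : ℝ) ^ n := by
            rw [Nat.cast_mul, mul_pow]; norm_num
    have hfinal : c < 8 ^ n * 2 ^ m * (c / (2 ^ m * 8 ^ n)) := by
      calc c < ((2 * T' : ℕ) : ℝ) ^ n * 2 ^ m * s0 := hkey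
        _ ≤ 8 ^ n * ((T' / 2 : ℕ) : ℝ) ^ n * 2 ^ m * s0 := by
            have h2 : (0:ℝ) ≤ 2 ^ m * s0 := by positivity
            nlinarith [h8, h2]
        _ = 8 ^ n * 2 ^ m * (((T' / 2 : ℕ) : ℝ) ^ n * s0) := by ring
        _ ≤ 8 ^ n * 2 ^ m *
            ∑ t ∈ b, (if l ≤ t then (t : ℝ) ^ (n - 1) * minErr A γ l t else 0) := by
            apply mul_le_mul_of_nonneg_left hblock (by positivity)
        _ < 8 ^ n * 2 ^ m * (c / (2 ^ m * 8 ^ n)) := by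
            apply mul_lt_mul_of_pos_left hlt (by positivity)
    have heq : (8:ℝ) ^ n * 2 ^ m * (c / (2 ^ m * 8 ^ n)) = c := by
      field_simp
    linarith
  · push_neg at hexists
    set s0 : ℝ := minErr A γ l (2 * T) with hs0def
    have hs0pos : 0 < s0 := hμpos _ (by omega)
    obtain ⟨N, hN⟩ := exists_nat_gt (c / (2 ^ m * 8 ^ n) / s0)
    set b : Finset ℕ := Finset.Icc (2 * T + 1) (2 * T + N) with hbdef
    have hbT : ∀ t ∈ b, T ≤ t := by
      intro t htb; rw [hbdef, Finset.mem_Icc] at htb; omega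
    have hterm : ∀ t ∈ b, s0 ≤ (if l ≤ t then (t : ℝ) ^ (n - 1) * minErr A γ l t else 0) := by
      intro t htb
      have htT := hbT t htb
      have hlt : l ≤ t := le_trans hTl htT
      rw [if_pos hlt]
      have hμ : s0 ≤ minErr A γ l t := by
        apply hexists
        rw [hbdef, Finset.mem_Icc] at htb; omega
      have h1 : (1:ℝ) ≤ (t : ℝ) ^ (n - 1) := by
        apply one_le_pow₀
        exact_mod_cast (show 1 ≤ t by omega)
      calc s0 = 1 * s0 := (one_mul _).symm
        _ ≤ (t : ℝ) ^ (n - 1) * minErr A γ l t :=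
            mul_le_mul h1 hμ hs0pos.le (by positivity)
    have hsumlb : (b.card : ℝ) * s0
        ≤ ∑ t ∈ b, (if l ≤ t then (t : ℝ) ^ (n - 1) * minErr A γ l t else 0) := by
      have h := Finset.card_nsmul_le_sum b _ _ hterm
      rwa [nsmul_eq_mul] at h
    have hcard : b.card = N := by rw [hbdef, Nat.card_Icc]; omega
    have hdisj : Disjoint b s :=
      Finset.disjoint_left.mpr fun ht htb hts => hnots _ (hbT _ htb) hts
    have hltK := hs b hdisj
    rw [Set.mem_Iio] at hltK
    have hNs : c / (2 ^ m * 8 ^ n) < (N : ℝ) * s0 := (div_lt_iff₀ hs0pos).mp hN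
    rw [hcard] at hsumlb
    linarith

lemma znn_zero {n : ℕ} : znn (0 : Fin n → ℤ) = 0 := by
  simp [znn]

lemma znn_pos_ne_zero {n : ℕ} {q : Fin n → ℤ} {l : ℕ} (hl : 1 ≤ l) (h : l ≤ znn q) :
    q ≠ 0 := by
  rintro rfl
  rw [znn_zero] at h
  omega

theorem bad_implies_omega_fiber_empty (m n : ℕ) (hm : 0 < m) (hn : 0 < n)
    (A : Matrix (Fin m) (Fin n) ℝ) (c : ℝ) (hc : 0 < c)
    (hbad : ∀ q : Fin n → ℤ, q ≠ 0 → c ≤ (znn q : ℝ) ^ n * approxErr A 0 q ^ m) :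
    ∀ γ : Fin m → ℝ, (∀ i, 0 ≤ γ i ∧ γ i < 1) →
      (∃ l : ℕ, 1 ≤ l ∧
        ¬ Summable (fun t : ℕ => if l ≤ t then (t : ℝ) ^ (n - 1) * minErr A γ l t else 0)) ∧
      (∃ ψ : ℕ → ℝ, Antitone ψ ∧ (∀ q, 0 ≤ ψ q) ∧
        ¬ Summable (fun q : ℕ => (q : ℝ) ^ (n - 1) * ψ q ^ m) ∧
        {q : Fin n → ℤ | approxErr A γ q < ψ (znn q)}.Finite) := by

  intro γ _
  -- choose l beyond the (at most one) exact solution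
  obtain ⟨l, hl, hpos⟩ : ∃ l : ℕ, 1 ≤ l ∧ ∀ q : Fin n → ℤ, l ≤ znn q → 0 < approxErr A γ q := by
    by_cases hz : ∃ q : Fin n → ℤ, q ≠ 0 ∧ approxErr A γ q = 0
    · obtain ⟨q₀, hq₀ne, hq₀⟩ := hz
      refine ⟨znn q₀ + 1, by omega, fun q hq => ?_⟩
      rcases lt_or_eq_of_le (approxErr_nonneg A γ q) with h | h
      · exact h
      · exfalso
        have hqne : q ≠ 0 := znn_pos_ne_zero (by omega) hq
        have hqq₀ : q ≠ q₀ := by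
          intro h'
          rw [h'] at hq
          omega
        have := sep A γ c hbad q q₀ hqq₀ (znn q) le_rfl (by omega)
        rw [← h, hq₀] at this
        simp only [add_zero] at this
        rw [zero_pow hm.ne', mul_zero] at this
        linarith
    · push_neg at hz
      refine ⟨1, le_rfl, fun q hq => ?_⟩
      rcases lt_or_eq_of_le (approxErr_nonneg A γ q) with h | h
      · exact h
      · exact absurd h.symm (hz q (znn_pos_ne_zero le_rfl hq))
  have hns := main_nonsummable hm hn A γ c hc hbad hl hpos
  refine ⟨⟨l, hl, hns⟩, ?_⟩
  -- construct ψ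
  set ψ : ℕ → ℝ := fun t => (minErr A γ l (max t l)) ^ ((m : ℝ)⁻¹) with hψdef
  have hψnn : ∀ t, 0 ≤ ψ t := fun t => Real.rpow_nonneg (minErr_nonneg A γ l _) _
  have hψpow : ∀ t, ψ t ^ m = minErr A γ l (max t l) := by
    intro t
    rw [hψdef]
    exact Real.rpow_inv_natCast_pow (minErr_nonneg A γ l _) hm.ne'
  refine ⟨ψ, ?_, hψnn, ?_, ?_⟩
  · intro t t' htt'
    apply Real.rpow_le_rpow (minErr_nonneg A γ l _) ?_ (by positivity)
    exact minErr_anti hn A γ (le_max_right t l) (max_le_max htt' le_rfl)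
  · intro hsumg
    apply hns
    have h1 : Summable (fun k : ℕ => ((k + l : ℕ) : ℝ) ^ (n - 1) * ψ (k + l) ^ m) :=
      (summable_nat_add_iff l).mpr hsumg
    have h2 : (fun k : ℕ => ((k + l : ℕ) : ℝ) ^ (n - 1) * ψ (k + l) ^ m)
        = fun k : ℕ => (if l ≤ k + l then ((k + l : ℕ) : ℝ) ^ (n - 1) * minErr A γ l (k + l) else 0) := by
      funext k
      rw [if_pos (by omega), hψpow, max_eq_left (by omega)]
    rw [h2] at h1
    exact (summable_nat_add_iff l).mp h1
  · apply Set.Finite.subset (znn_ball_finite (n := n) (l - 1))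
    intro q hq
    simp only [Set.mem_setOf_eq] at hq ⊢
    by_contra h
    push_neg at h
    have hlq : l ≤ znn q := by omega
    have hle : minErr A γ l (znn q) ≤ approxErr A γ q ^ m := minErr_le A γ hlq le_rfl
    have hlt : approxErr A γ q ^ m < ψ (znn q) ^ m :=
      pow_lt_pow_left₀ hq (approxErr_nonneg A γ q) hm.ne'
    rw [hψpow, max_eq_left hlq] at hlt
    linarith
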